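/- arXiv:2411.12127 — 4 statements merged into one kernel-verified Lean document; each statement's English description precedes it below -/
import Mathlib

section
/- Let S and L be K×K real symmetric matrices with non-negative entries that are strictly diagonally dominant (each diagonal entry strictly exceeds the sum of the absolute values of the other entries in its row). If S·Sᵀ = L·Lᵀ, then S = L. -/
lemma posSemidef_of_dd {n : ℕ} {A : Matrix (Fin n) (Fin n) ℝ} (hA : A.IsHermitian)
    (hdd : ∀ i, ∑ k ∈ Finset.univ.erase i, |A i k| < |A i i|)
    (hdiag : ∀ i, 0 ≤ A i i) : A.PosSemidef := by
  apply hA.posSemidef_iff_eigenvalues_nonneg.mpr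
  intro i
  have hspec := hA.eigenvalues_mem_spectrum_real i
  have heig : Module.End.HasEigenvalue (Matrix.toLin' A) (hA.eigenvalues i) := by
    rw [Module.End.hasEigenvalue_iff_mem_spectrum]
    rwa [show spectrum ℝ (Matrix.toLin' A) = spectrum ℝ A from
      AlgEquiv.spectrum_eq (Matrix.toLinAlgEquiv (Pi.basisFun ℝ (Fin n))) A]
  obtain ⟨k, hk⟩ := eigenvalue_mem_ball heig
  rw [Metric.mem_closedBall, Real.dist_eq] at hk
  have h1 : ∑ j ∈ Finset.univ.erase k, ‖A k j‖ < A k k := by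
    have := hdd k
    rwa [abs_of_nonneg (hdiag k)] at this
  have h2 : A k k - hA.eigenvalues i ≤ |hA.eigenvalues i - A k k| := by
    rw [abs_sub_comm]; exact le_abs_self _
  linarith [show (0 : Fin n → ℝ) i = 0 from rfl]
open scoped MatrixOrder in
lemma psd_eq_of_sq_eq_sq {K : ℕ} {A B : Matrix (Fin K) (Fin K) ℝ} (hA : A.PosSemidef)
    (hB : B.PosSemidef) (hAB : A ^ 2 = B ^ 2) : A = B := by
  rw [← CFC.sqrt_sq A hA.nonneg, ← CFC.sqrt_sq B hB.nonneg, hAB]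
theorem gramian_unique_factorization {K : ℕ}
    (S L : Matrix (Fin K) (Fin K) ℝ)
    (hSsymm : S.IsSymm) (hLsymm : L.IsSymm)
    (hSnn : ∀ i j, 0 ≤ S i j) (hLnn : ∀ i j, 0 ≤ L i j)
    (hSdd : ∀ i, ∑ k ∈ Finset.univ.erase i, |S i k| < |S i i|)
    (hLdd : ∀ i, ∑ k ∈ Finset.univ.erase i, |L i k| < |L i i|)
    (h : S * S.transpose = L * L.transpose) : S = L := by
  have hSh : S.IsHermitian := by
    rw [Matrix.IsHermitian, Matrix.conjTranspose]; simpa [Matrix.map, Matrix.transpose] using hSsymm.eq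
  have hLh : L.IsHermitian := by
    rw [Matrix.IsHermitian, Matrix.conjTranspose]; simpa [Matrix.map, Matrix.transpose] using hLsymm.eq
  have hS := posSemidef_of_dd hSh hSdd (fun i => hSnn i i)
  have hL := posSemidef_of_dd hLh hLdd (fun i => hLnn i i)
  apply psd_eq_of_sq_eq_sq hS hL
  rw [hSsymm.eq, hLsymm.eq] at h
  rw [pow_two, pow_two, h]
end

section
/- For any two real square matrices A and B of the same size, A·Aᵀ = B·Bᵀ if and only if there exists an orthogonal matrix Q such that A = B·Q. -/
open scoped RealInnerProductSpace Matrix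

lemma exists_isometry_comp {V : Type*} [NormedAddCommGroup V] [InnerProductSpace ℝ V]
    [FiniteDimensional ℝ V] (f g : V →ₗ[ℝ] V)
    (h : ∀ x y, ⟪f x, f y⟫ = ⟪g x, g y⟫) :
    ∃ U : V →ₗᵢ[ℝ] V, ∀ x, f x = U (g x) := by
  have hker : LinearMap.ker g ≤ LinearMap.ker f := by
    intro x hx
    rw [LinearMap.mem_ker] at hx ⊢
    have := h x x
    rw [hx, inner_zero_left] at this
    exact inner_self_eq_zero.mp this
  let h₀ : LinearMap.range g →ₗ[ℝ] V :=
    ((LinearMap.ker g).liftQ f hker).comp (g.quotKerEquivRange).symm.toLinearMap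
  have h₀_apply : ∀ x : V, ∀ hm, h₀ ⟨g x, hm⟩ = f x := by
    intro x hm
    have : (g.quotKerEquivRange).symm ⟨g x, hm⟩ = Submodule.Quotient.mk x := by
      rw [LinearEquiv.symm_apply_eq]
      exact Subtype.ext (g.quotKerEquivRange_apply_mk x).symm
    simp only [h₀, LinearMap.comp_apply, LinearEquiv.coe_coe, this, Submodule.liftQ_apply]
  have h₀_norm : ∀ v : LinearMap.range g, ‖h₀ v‖ = ‖v‖ := by
    rintro ⟨v, x, rfl⟩
    show ‖h₀ ⟨g x, LinearMap.mem_range_self g x⟩‖ = ‖(⟨g x, LinearMap.mem_range_self g x⟩ : LinearMap.range g)‖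
    rw [h₀_apply x]
    have h1 := h x x
    rw [real_inner_self_eq_norm_sq, real_inner_self_eq_norm_sq] at h1
    have : ‖f x‖ = ‖g x‖ := by nlinarith [norm_nonneg (f x), norm_nonneg (g x)]
    simpa [Submodule.coe_norm] using this
  let L : LinearMap.range g →ₗᵢ[ℝ] V := ⟨h₀, h₀_norm⟩
  refine ⟨L.extend, fun x => ?_⟩
  have := L.extend_apply ⟨g x, LinearMap.mem_range_self g x⟩
  simpa [L, h₀_apply x] using this.symm

theorem gramian_eq_iff_orthogonal_factor {K : ℕ}
    (A B : Matrix (Fin K) (Fin K) ℝ) :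
    A * A.transpose = B * B.transpose ↔
      ∃ Q : Matrix (Fin K) (Fin K) ℝ, Q * Q.transpose = 1 ∧ A = B * Q := by
  constructor
  · intro hAB
    set f := Matrix.toEuclideanLin A.transpose with hf
    set g := Matrix.toEuclideanLin B.transpose with hg
    have key : ∀ (M : Matrix (Fin K) (Fin K) ℝ) (x y : EuclideanSpace ℝ (Fin K)),
        ⟪Matrix.toEuclideanLin M.transpose x, Matrix.toEuclideanLin M.transpose y⟫ =
          ((M * M.transpose) *ᵥ (WithLp.equiv 2 _ x)) ⬝ᵥ (WithLp.equiv 2 _ y) := by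
      intro M x y
      have h1 : ⟪Matrix.toEuclideanLin M.transpose x, Matrix.toEuclideanLin M.transpose y⟫ =
          (M.transpose *ᵥ (WithLp.equiv 2 _ x)) ⬝ᵥ (M.transpose *ᵥ (WithLp.equiv 2 _ y)) := by
        simp [PiLp.inner_apply, Matrix.toEuclideanLin_apply, dotProduct,
          RCLike.inner_apply, mul_comm]
      rw [h1, Matrix.dotProduct_mulVec, Matrix.vecMul_transpose, Matrix.mulVec_mulVec]
    have hinner : ∀ x y, ⟪f x, f y⟫ = ⟪g x, g y⟫ := by
      intro x y
      rw [hf, hg, key, key, hAB]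
    obtain ⟨U, hU⟩ := exists_isometry_comp f g hinner
    set Mm := Matrix.toEuclideanLin.symm U.toLinearMap with hMm
    have hMU : ∀ v, Matrix.toEuclideanLin Mm v = U v := by
      intro v
      rw [hMm, Matrix.toEuclideanLin.apply_symm_apply]
      rfl
    have hA : A.transpose = Mm * B.transpose := by
      apply Matrix.toEuclideanLin.injective
      apply LinearMap.ext
      intro x
      have hcomp : Matrix.toEuclideanLin (Mm * B.transpose) x =
          (Matrix.toEuclideanLin Mm) (Matrix.toEuclideanLin B.transpose x) := by
        simp [Matrix.toEuclideanLin_apply, Matrix.mulVec_mulVec]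
      rw [hcomp, hMU, ← hg, ← hf]
      exact hU x
    have horth : Mm.transpose * Mm = 1 := by
      have hvv : ∀ x y : Fin K → ℝ,
          x ⬝ᵥ ((Mm.transpose * Mm) *ᵥ y) = x ⬝ᵥ y := by
        intro x y
        have h2 : x ⬝ᵥ ((Mm.transpose * Mm) *ᵥ y) = (Mm *ᵥ x) ⬝ᵥ (Mm *ᵥ y) := by
          rw [← Matrix.mulVec_mulVec, Matrix.dotProduct_mulVec x, Matrix.vecMul_transpose]
        have h3 : ⟪(Matrix.toEuclideanLin Mm) ((WithLp.equiv 2 _).symm x),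
            (Matrix.toEuclideanLin Mm) ((WithLp.equiv 2 _).symm y)⟫ =
            (Mm *ᵥ x) ⬝ᵥ (Mm *ᵥ y) := by
          simp [PiLp.inner_apply, Matrix.toEuclideanLin_apply, dotProduct,
            RCLike.inner_apply, mul_comm]
        have h4 : ⟪((WithLp.equiv 2 (Fin K → ℝ)).symm x : EuclideanSpace ℝ (Fin K)),
            (WithLp.equiv 2 (Fin K → ℝ)).symm y⟫ = x ⬝ᵥ y := by
          simp [PiLp.inner_apply, dotProduct, RCLike.inner_apply, mul_comm]
        have h5 := U.inner_map_map ((WithLp.equiv 2 (Fin K → ℝ)).symm x)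
          ((WithLp.equiv 2 (Fin K → ℝ)).symm y)
        rw [← hMU, ← hMU, h3, h4] at h5
        rw [h2, h5]
      ext i j
      have := hvv (Pi.single i 1) (Pi.single j 1)
      simpa [Matrix.one_apply, single_dotProduct, dotProduct_single,
        Pi.single_apply, eq_comm] using this
    refine ⟨Mm.transpose, by rw [Matrix.transpose_transpose]; exact horth, ?_⟩
    have := congrArg Matrix.transpose hA
    rw [Matrix.transpose_transpose, Matrix.transpose_mul, Matrix.transpose_transpose] at this
    exact this
  · rintro ⟨Q, hQ, rfl⟩
    rw [Matrix.transpose_mul, Matrix.mul_assoc, ← Matrix.mul_assoc Q, hQ, Matrix.one_mul]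
end

section
/- If S is an invertible real symmetric positive definite matrix and L is a real symmetric matrix with L·L = S·S, then S and L commute: S·L = L·S. -/
open scoped Matrix

lemma trace_transpose_mul_mul {K : ℕ} (S A : Matrix (Fin K) (Fin K) ℝ) :
    (Aᵀ * S * A).trace = ∑ i, (fun j => A j i) ⬝ᵥ S *ᵥ (fun j => A j i) := by
  simp only [Matrix.trace, Matrix.diag, Matrix.mul_apply, Matrix.transpose_apply,
    dotProduct, Matrix.mulVec, Finset.sum_mul, Finset.mul_sum]
  refine Finset.sum_congr rfl fun i _ => ?_
  rw [Finset.sum_comm]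
  exact Finset.sum_congr rfl fun j _ => Finset.sum_congr rfl fun k _ => by ring

theorem commute_of_sq_eq {K : ℕ}
    (S L : Matrix (Fin K) (Fin K) ℝ)
    (hSsymm : S.IsSymm) (hLsymm : L.IsSymm)
    (hSpd : S.PosDef) (hSinv : IsUnit S)
    (h : L * L = S * S) : S * L = L * S := by
  set X := S * L - L * S with hXdef
  have hX : S * X + X * S = 0 := by
    have e : S * X + X * S = S * S * L - L * (S * S) := by
      simp only [hXdef, Matrix.mul_sub, Matrix.sub_mul, Matrix.mul_assoc]
      abel
    rw [e, ← h, Matrix.mul_assoc, sub_self]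
  have t1 : (Xᵀ * S * X).trace + (Xᵀ * (X * S)).trace = 0 := by
    rw [← Matrix.trace_add]
    have e : Xᵀ * S * X + Xᵀ * (X * S) = Xᵀ * (S * X + X * S) := by
      simp only [Matrix.mul_add, Matrix.mul_assoc]
    rw [e, hX, Matrix.mul_zero, Matrix.trace_zero]
  have t2 : (Xᵀ * (X * S)).trace = ((Xᵀ)ᵀ * S * Xᵀ).trace := by
    rw [Matrix.trace_mul_comm, Matrix.transpose_transpose]
  have nonneg : ∀ v : Fin K → ℝ, 0 ≤ v ⬝ᵥ S *ᵥ v := by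
    intro v
    simpa using hSpd.posSemidef.dotProduct_mulVec_nonneg v
  have s2nonneg : 0 ≤ ((Xᵀ)ᵀ * S * Xᵀ).trace := by
    rw [trace_transpose_mul_mul]
    exact Finset.sum_nonneg fun i _ => nonneg _
  have s1nonneg : ∀ i ∈ Finset.univ, (0:ℝ) ≤ (fun j => X j i) ⬝ᵥ S *ᵥ (fun j => X j i) :=
    fun i _ => nonneg _
  have s1zero : (∑ i, (fun j => X j i) ⬝ᵥ S *ᵥ (fun j => X j i)) = 0 := by
    rw [← trace_transpose_mul_mul]
    have h2 : 0 ≤ (Xᵀ * S * X).trace := by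
      rw [trace_transpose_mul_mul]; exact Finset.sum_nonneg s1nonneg
    rw [t2] at t1
    linarith
  have hX0 : X = 0 := by
    ext i j
    have hcol : (fun k => X k j) = (0 : Fin K → ℝ) := by
      by_contra hv
      have hpos : 0 < (fun k => X k j) ⬝ᵥ S *ᵥ (fun k => X k j) := by
        simpa using hSpd.dotProduct_mulVec_pos hv
      have := (Finset.sum_eq_zero_iff_of_nonneg s1nonneg).mp s1zero j (Finset.mem_univ j)
      linarith
    simpa using congrFun hcol i
  rw [hXdef] at hX0
  exact sub_eq_zero.mp hX0
end

section
/- Let S be a K×K matrix with S_{ij} = E_{x∼D_i}[P(c=j|x)], and let G = S·Sᵀ be its Gramian, so that G_{ij} = Σ_{k=1}^K S_{ik} S_{jk}. If S is symmetric, doubly stochastic and strictly diagonally dominant, then G is symmetric, doubly stochastic and positive definite (though not necessarily strictly diagonally dominant), and G uniquely determines S among strictly diagonally dominant non-negative symmetric matrices. -/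
open Finset Matrix

private lemma swap_offdiag {K : ℕ} (f : Fin K → Fin K → ℝ) :
    ∑ i, ∑ j ∈ Finset.univ.erase i, f i j = ∑ i, ∑ j ∈ Finset.univ.erase i, f j i := by
  simp_rw [Finset.sum_erase_eq_sub (Finset.mem_univ _), Finset.sum_sub_distrib]
  rw [Finset.sum_comm (f := fun i j => f j i)]

private lemma sdd_posDef {K : ℕ} (A : Matrix (Fin K) (Fin K) ℝ)
    (hsymm : A.IsSymm) (hdiag : ∀ i, 0 ≤ A i i)
    (hdd : ∀ i, ∑ k ∈ Finset.univ.erase i, |A i k| < |A i i|) : A.PosDef := by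
  have hAsym : ∀ i j, A j i = A i j := fun i j => (hsymm.apply j i).symm
  have hc : ∀ i, 0 < A i i - ∑ k ∈ Finset.univ.erase i, |A i k| := by
    intro i
    have h := hdd i
    have : |A i i| = A i i := abs_of_nonneg (hdiag i)
    linarith
  rw [Matrix.posDef_iff_dotProduct_mulVec]
  constructor
  · rw [Matrix.IsHermitian, Matrix.conjTranspose_eq_transpose_of_trivial]
    exact hsymm
  intro x hx
  have hform : dotProduct (star x) (A.mulVec x)
      = ∑ i, (A i i * x i ^ 2 + ∑ j ∈ Finset.univ.erase i, x i * A i j * x j) := by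
    simp only [dotProduct, Matrix.mulVec, Pi.star_apply, star_trivial,
      Finset.mul_sum]
    refine Finset.sum_congr rfl fun i _ => ?_
    rw [← Finset.add_sum_erase _ (fun j => x i * (A i j * x j)) (Finset.mem_univ i)]
    congr 1
    · ring
    · exact Finset.sum_congr rfl fun j _ => by ring
  have hU : ∑ i, ∑ j ∈ Finset.univ.erase i, |A i j| * x j ^ 2
      = ∑ i, ∑ j ∈ Finset.univ.erase i, |A i j| * x i ^ 2 := by
    rw [swap_offdiag (fun i j => |A i j| * x j ^ 2)]
    simp_rw [hAsym]
  have hTU : -(∑ i, ∑ j ∈ Finset.univ.erase i, |A i j| * x i ^ 2)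
      ≤ ∑ i, ∑ j ∈ Finset.univ.erase i, x i * A i j * x j := by
    have h2 : 0 ≤ ∑ i, ∑ j ∈ Finset.univ.erase i,
        (x i * A i j * x j * 2 + |A i j| * x i ^ 2 + |A i j| * x j ^ 2) := by
      refine Finset.sum_nonneg fun i _ => Finset.sum_nonneg fun j _ => ?_
      nlinarith [sq_nonneg (x i + x j), sq_nonneg (x i - x j), abs_nonneg (A i j),
        neg_abs_le (A i j), le_abs_self (A i j)]
    simp_rw [Finset.sum_add_distrib, ← Finset.sum_mul] at h2
    simp_rw [← Finset.sum_mul] at hU ⊢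
    linarith
  have key : ∑ i, (A i i - ∑ k ∈ Finset.univ.erase i, |A i k|) * x i ^ 2
      ≤ dotProduct (star x) (A.mulVec x) := by
    rw [hform]
    simp_rw [sub_mul, Finset.sum_mul, Finset.sum_sub_distrib, Finset.sum_add_distrib]
    linarith
  refine lt_of_lt_of_le ?_ key
  obtain ⟨i, hi⟩ := Function.ne_iff.mp hx
  refine Finset.sum_pos' (fun j _ => mul_nonneg (hc j).le (sq_nonneg _))
    ⟨i, Finset.mem_univ i, mul_pos (hc i) (sq_pos_iff.mpr hi)⟩

theorem gramian_determines_collision_matrix {K : ℕ}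
    (S : Matrix (Fin K) (Fin K) ℝ)
    (hsymm : S.IsSymm)
    (hnn : ∀ i j, 0 ≤ S i j)
    (hrow : ∀ i, ∑ j, S i j = 1)
    (hcol : ∀ j, ∑ i, S i j = 1)
    (hdd : ∀ i, ∑ k ∈ Finset.univ.erase i, |S i k| < |S i i|) :
    (∀ i j, (S * S.transpose) i j = ∑ k, S i k * S j k) ∧
    (S * S.transpose).IsSymm ∧
    (∀ i j, 0 ≤ (S * S.transpose) i j) ∧
    (∀ i, ∑ j, (S * S.transpose) i j = 1) ∧
    (∀ j, ∑ i, (S * S.transpose) i j = 1) ∧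
    (S * S.transpose).PosDef ∧
    (∀ L : Matrix (Fin K) (Fin K) ℝ, L.IsSymm → (∀ i j, 0 ≤ L i j) →
      (∀ i, ∑ k ∈ Finset.univ.erase i, |L i k| < |L i i|) →
      L * L.transpose = S * S.transpose → L = S) := by
  have hentry : ∀ i j, (S * S.transpose) i j = ∑ k, S i k * S j k := by
    intro i j
    simp [Matrix.mul_apply, Matrix.transpose_apply]
  have hSpd : S.PosDef := sdd_posDef S hsymm (fun i => hnn i i) hdd
  refine ⟨hentry, ?_, ?_, ?_, ?_, ?_, ?_⟩
  · rw [Matrix.IsSymm, Matrix.transpose_mul, Matrix.transpose_transpose, hsymm]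
  · intro i j
    rw [hentry]
    exact Finset.sum_nonneg fun k _ => mul_nonneg (hnn i k) (hnn j k)
  · intro i
    simp_rw [hentry]
    rw [Finset.sum_comm]
    simp_rw [← Finset.mul_sum]
    simp [hcol, hrow]
  · intro j
    simp_rw [hentry]
    rw [Finset.sum_comm]
    simp_rw [← Finset.sum_mul]
    simp [hcol, hrow]
  · -- PosDef of S * Sᵀ
    rw [show S.transpose = S from hsymm]
    rw [Matrix.posDef_iff_dotProduct_mulVec]
    constructor
    · rw [Matrix.IsHermitian, Matrix.conjTranspose_eq_transpose_of_trivial,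
        Matrix.transpose_mul, hsymm]
    · intro x hx
      have hy : S.mulVec x ≠ 0 := by
        intro h
        have := (Matrix.posDef_iff_dotProduct_mulVec.mp hSpd).2 hx
        rw [h] at this
        simp at this
      have heq : dotProduct (star x) ((S * S).mulVec x)
          = dotProduct (S.mulVec x) (S.mulVec x) := by
        rw [← Matrix.mulVec_mulVec, dotProduct_mulVec]
        congr 1
        rw [show (star x : Fin K → ℝ) = x by simp]
        conv_lhs => rw [← hsymm]
        rw [Matrix.vecMul_transpose]
      rw [heq]
      rcases lt_or_eq_of_le (Finset.sum_nonneg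
        (fun k _ => mul_self_nonneg (S.mulVec x k)) :
        (0:ℝ) ≤ dotProduct (S.mulVec x) (S.mulVec x)) with h | h
      · exact h
      · exact absurd (dotProduct_self_eq_zero.mp h.symm) hy
  · intro L hLsymm hLnn hLdd hLG
    have hLpd : L.PosDef := sdd_posDef L hLsymm (fun i => hLnn i i) hLdd
    have h1 : L.transpose = L := hLsymm
    have h2 : S.transpose = S := hsymm
    rw [h1, h2] at hLG
    have hsq : L ^ 2 = S ^ 2 := by rw [pow_two, pow_two]; exact hLG
    exact (by open scoped MatrixOrder in
      rw [← CFC.sqrt_sq L hLpd.posSemidef.nonneg, hsq, CFC.sqrt_sq S hSpd.posSemidef.nonneg])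
end
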